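/- arXiv:cs/0203022 — 6 statements merged into one kernel-verified Lean document; each statement's English description precedes it below -/
import Mathlib

section
/- Let s and t be terms and suppose θ ∈ mgu({s = t}). If x is a variable with χ(θ(x)) = 2, then either x ∈ var(s) ∩ var(t), or x ∈ var(t) and χ(s) = 2, or x ∈ var(s) and χ(t) = 2. -/
open scoped Classical

namespace SharingPaper

/-- Finite first-order terms over an arity-indexed alphabet `F`, with
variables drawn from the countably infinite set `ℕ` (playing the role of `U`). -/
inductive Term (F : ℕ → Type) : Type
  | var : ℕ → Term F
  | app : (n : ℕ) → F n → (Fin n → Term F) → Term F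

namespace Term

variable {F : ℕ → Type}

/-- The set `var(t)` of variables occurring in a term. -/
def vars : Term F → Set ℕ
  | var x => {x}
  | app n _ ts => ⋃ i : Fin n, vars (ts i)

/-- Number of occurrences of the variable `x` in a term. -/
def count (x : ℕ) : Term F → ℕ
  | var y => if y = x then 1 else 0
  | app n _ ts => ∑ i : Fin n, count x (ts i)

/-- `χ(x, t) = min(2, number of occurrences of x in t)`. -/
def chiVar (x : ℕ) (t : Term F) : ℕ := min 2 (t.count x)

/-- `χ(t) = max {χ(x, t) | x ∈ U}`. -/
noncomputable def mult (t : Term F) : ℕ := sSup (Set.range fun x => chiVar x t)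

end Term

variable {F : ℕ → Type}

/-- Substitutions, represented as maps from variables to terms. -/
abbrev Subst (F : ℕ → Type) := ℕ → Term F

namespace Subst

/-- Homomorphic extension of a substitution to terms. -/
def apply (θ : Subst F) : Term F → Term F
  | .var x => θ x
  | .app n f ts => .app n f fun i => apply θ (ts i)

/-- `dom(θ) = {u | θ(u) ≠ u}`. -/
def dom (θ : Subst F) : Set ℕ := {x | θ x ≠ .var x}

/-- `rng(θ) = ∪ {var(θ(u)) | u ∈ dom(θ)}`. -/
def rng (θ : Subst F) : Set ℕ := ⋃ x ∈ dom θ, (θ x).vars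

/-- A genuine substitution has a finite domain. -/
def IsSubst (θ : Subst F) : Prop := (dom θ).Finite

/-- Composition: `(θ ∘ ψ)(u) = θ(ψ(u))`. -/
def comp (θ ψ : Subst F) : Subst F := fun x => θ.apply (ψ x)

/-- `θ` is idempotent iff `dom(θ) ∩ rng(θ) = ∅`. -/
def Idempotent (θ : Subst F) : Prop := dom θ ∩ rng θ = ∅

/-- `θ ≤ ψ` iff `ψ = δ ∘ θ` for some substitution `δ`. -/
def Le (θ ψ : Subst F) : Prop := ∃ δ : Subst F, IsSubst δ ∧ ψ = comp δ θ

/-- `occ(θ, y) = {u ∈ U | y ∈ var(θ(u))}`. -/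
def occ (θ : Subst F) (y : ℕ) : Set ℕ := {u | y ∈ (θ u).vars}

/-- `α_Sh(θ) = {occ(θ, u) ∩ X | u ∈ U}`. -/
def alphaSh (X : Set ℕ) (θ : Subst F) : Set (Set ℕ) :=
  Set.range fun u => occ θ u ∩ X

/-- An assignment `M ⊆ U` models `θ` iff for every `x ↦ t ∈ θ`, `x ∈ M ↔ var(t) ⊆ M`. -/
def Models (M : Set ℕ) (θ : Subst F) : Prop :=
  ∀ x ∈ dom θ, (x ∈ M ↔ (θ x).vars ⊆ M)

/-- `θ` satisfies a Pos abstraction `f` over `X` iff `M ∩ X ∈ f` for every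
assignment `M` that models `θ`. -/
def Satisfies (X : Set ℕ) (θ : Subst F) (f : Set (Set ℕ)) : Prop :=
  ∀ M : Set ℕ, Models M θ → M ∩ X ∈ f

end Subst

/-- The set of unifiers of a set of equations. -/
def unif (E : Set (Term F × Term F)) : Set (Subst F) :=
  {θ | Subst.IsSubst θ ∧ ∀ p ∈ E, θ.apply p.1 = θ.apply p.2}

/-- Most general unifiers. -/
def mgu (E : Set (Term F × Term F)) : Set (Subst F) :=
  {θ ∈ unif E | ∀ ψ ∈ unif E, Subst.Le θ ψ}

/-- Idempotent most general unifiers. -/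
def imgu (E : Set (Term F × Term F)) : Set (Subst F) :=
  {θ ∈ mgu E | Subst.Idempotent θ}

/-- `γ_Sh(S)`. -/
def gammaSh (X : Set ℕ) (S : Set (Set ℕ)) : Set (Set (Term F × Term F)) :=
  {E | E.Finite ∧ ∃ θ ∈ imgu E, Subst.alphaSh X θ ⊆ S}

/-- `γ_Fr(F)`. -/
def gammaFr (Fv : Set ℕ) : Set (Set (Term F × Term F)) :=
  {E | E.Finite ∧ ∃ θ ∈ imgu E, ∀ x ∈ Fv, ∃ y, θ x = Term.var y}

/-- `γ_Lin(L)`. -/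
def gammaLin (L : Set ℕ) : Set (Set (Term F × Term F)) :=
  {E | E.Finite ∧ ∃ θ ∈ imgu E, ∀ x ∈ L, (θ x).mult ≤ 1}

/-- `γ_Pos(f)`. -/
def gammaPos (X : Set ℕ) (f : Set (Set ℕ)) : Set (Set (Term F × Term F)) :=
  {E | E.Finite ∧ ∃ θ ∈ imgu E, Subst.Satisfies X θ f}

/-- `γ_SFL(S, F, L)`. -/
def gammaSFL (X : Set ℕ) (S : Set (Set ℕ)) (Fv L : Set ℕ) :
    Set (Set (Term F × Term F)) :=
  gammaSh X S ∩ gammaFr Fv ∩ gammaLin L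

/-- `var(S) = ∪ {G | G ∈ S}`. -/
def varS {α : Type*} (S : Set (Set α)) : Set α := ⋃ G ∈ S, G

/-- `rel(t, S) = {G ∈ S | var(t) ∩ G ≠ ∅}`. -/
def rel (t : Term F) (S : Set (Set ℕ)) : Set (Set ℕ) :=
  {G ∈ S | t.vars ∩ G ≠ ∅}

/-- Closure `S*`: the least superset of `S` closed under binary unions. -/
def closure {α : Type*} (S : Set (Set α)) : Set (Set α) :=
  ⋂₀ {S' | S ⊆ S' ∧ ∀ G1 ∈ S', ∀ G2 ∈ S', G1 ∪ G2 ∈ S'}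

/-- Pairwise union `S1 ⊎ S2`. -/
def pairUnion {α : Type*} (S1 S2 : Set (Set α)) : Set (Set α) :=
  {G | ∃ G1 ∈ S1, ∃ G2 ∈ S2, G = G1 ∪ G2}

/-- `S^{*F}`: the least superset `S'` of `S` such that `G1 ∪ G2 ∈ S'` whenever
`G1, G2 ∈ S'` and `G1 ∩ G2 ∩ F = ∅`. -/
def closureF {α : Type*} (Fv : Set α) (S : Set (Set α)) : Set (Set α) :=
  ⋂₀ {S' | S ⊆ S' ∧ ∀ G1 ∈ S', ∀ G2 ∈ S', G1 ∩ G2 ∩ Fv = ∅ → G1 ∪ G2 ∈ S'}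

/-- `S1 ⊎_F S2`. -/
def pairUnionF {α : Type*} (Fv : Set α) (S1 S2 : Set (Set α)) : Set (Set α) :=
  {G | ∃ G1 ∈ S1, ∃ G2 ∈ S2, (G1 ≠ G2 → G1 ∩ G2 ∩ Fv = ∅) ∧ G = G1 ∪ G2}

/-- The Filé decomposition `K_F(S)`. -/
def KF {α : Type*} (Fv : Set α) (S : Set (Set α)) : Set (Set (Set α)) :=
  {B | B ⊆ S ∧ Fv ⊆ varS B ∧
    ∀ G1 ∈ B, ∀ G2 ∈ B, G1 ≠ G2 → G1 ∩ G2 ∩ Fv = ∅}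

/-- Abstract multiplicity `χ(t, S, L)`. -/
noncomputable def chiA (t : Term F) (S : Set (Set ℕ)) (L : Set ℕ) : ℕ :=
  if (∃ x ∈ varS S, Term.chiVar x t = 2) ∨
     (∃ x ∈ varS S, x ∈ t.vars \ L) ∨
     (∃ G ∈ S, ∃ x ∈ t.vars, ∃ y ∈ t.vars, x ≠ y ∧ x ∈ G ∧ y ∈ G)
  then 2 else 1

/-- The term `t` is a variable belonging to the freeness set `Fv` ("t ∈ F"). -/
def IsFreeTerm (t : Term F) (Fv : Set ℕ) : Prop := ∃ x ∈ Fv, t = Term.var x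

/-- The term `t` is a variable ("t ∈ U"). -/
def IsVarTerm (t : Term F) : Prop := ∃ x, t = Term.var x

/-! ### Auxiliary development for statement 0 -/

section Stmt0Aux

variable {F : ℕ → Type}

namespace Term

/-- Size of a term. -/
def sizeT : Term F → ℕ
  | var _ => 1
  | app n _ ts => 1 + ∑ i : Fin n, sizeT (ts i)

/-- The finite set of variables of a term. -/
def varsT : Term F → Finset ℕ
  | var x => {x}
  | app _ _ ts => Finset.univ.biUnion fun i => varsT (ts i)

theorem mem_varsT {x : ℕ} {t : Term F} : x ∈ t.varsT ↔ 0 < t.count x := by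
  induction t with
  | var y =>
    simp only [varsT, Finset.mem_singleton, count]
    rcases eq_or_ne y x with h | h
    · subst h; simp
    · simp [h, Ne.symm h]
  | app n f ts ih =>
    simp only [varsT, Finset.mem_biUnion, Finset.mem_univ, true_and, count]
    constructor
    · rintro ⟨i, hi⟩
      exact lt_of_lt_of_le ((ih i).mp hi)
        (Finset.single_le_sum (f := fun i => count x (ts i)) (fun j _ => Nat.zero_le _)
          (Finset.mem_univ i))
    · intro h
      by_contra hc
      push_neg at hc
      have hz : ∀ i : Fin n, count x (ts i) = 0 := fun i => by
        have := (ih i).not.mp (hc i); omega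
      simp [Finset.sum_eq_zero (fun i _ => hz i)] at h

theorem count_eq_zero_of_not_mem {x : ℕ} {t : Term F} (h : x ∉ t.varsT) : t.count x = 0 := by
  have := mem_varsT.not.mp h; omega

theorem sizeT_pos (t : Term F) : 0 < t.sizeT := by
  cases t <;> simp [sizeT]

theorem mem_vars {x : ℕ} {t : Term F} : x ∈ t.vars ↔ 0 < t.count x := by
  induction t with
  | var y =>
    simp only [vars, Set.mem_singleton_iff, count]
    rcases eq_or_ne y x with h | h
    · subst h; simp
    · simp [h, Ne.symm h]
  | app n f ts ih =>
    simp only [vars, Set.mem_iUnion, count]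
    constructor
    · rintro ⟨i, hi⟩
      exact lt_of_lt_of_le ((ih i).mp hi)
        (Finset.single_le_sum (f := fun i => count x (ts i)) (fun j _ => Nat.zero_le _)
          (Finset.mem_univ i))
    · intro h
      by_contra hc
      push_neg at hc
      have hz : ∀ i : Fin n, count x (ts i) = 0 := fun i => by
        have := (ih i).not.mp (hc i); omega
      simp [Finset.sum_eq_zero (fun i _ => hz i)] at h

theorem count_pos_le_sum {n : ℕ} {ts : Fin n → Term F} {y : ℕ} {i : Fin n}
    (h : 0 < count y (ts i)) : 0 < ∑ j : Fin n, count y (ts j) :=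
  lt_of_lt_of_le h
    (Finset.single_le_sum (f := fun j => count y (ts j)) (fun j _ => Nat.zero_le _)
      (Finset.mem_univ i))

/-- `mult t ≤ 2`. -/
theorem mult_le_two (t : Term F) : t.mult ≤ 2 := by
  apply csSup_le (Set.range_nonempty _)
  rintro a ⟨y, rfl⟩
  exact min_le_left _ _

theorem mult_le_one_of_count {t : Term F} (h : ∀ z, t.count z ≤ 1) : t.mult ≤ 1 := by
  apply csSup_le (Set.range_nonempty _)
  rintro a ⟨y, rfl⟩
  have := h y
  simp only [chiVar]
  omega

theorem mult_eq_two_of_count {t : Term F} {z : ℕ} (h : 2 ≤ t.count z) : t.mult = 2 := by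
  refine le_antisymm (mult_le_two t) ?_
  have h2 : chiVar z t = 2 := by simp [chiVar]; omega
  calc (2 : ℕ) = chiVar z t := h2.symm
    _ ≤ t.mult := le_csSup ⟨2, by rintro a ⟨y, rfl⟩; exact min_le_left _ _⟩ ⟨z, rfl⟩

theorem exists_count_two_of_mult {t : Term F} (h : t.mult = 2) : ∃ z, 2 ≤ t.count z := by
  by_contra hc
  push_neg at hc
  have := mult_le_one_of_count (t := t) fun z => by have := hc z; omega
  omega

end Term

namespace Subst

theorem apply_var (σ : Subst F) (x : ℕ) : σ.apply (.var x) = σ x := rfl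

theorem apply_app (σ : Subst F) {n : ℕ} (f : F n) (ts : Fin n → Term F) :
    σ.apply (.app n f ts) = .app n f fun i => σ.apply (ts i) := rfl

theorem apply_comp (σ η : Subst F) (t : Term F) :
    (Subst.comp σ η).apply t = σ.apply (η.apply t) := by
  induction t with
  | var x => rfl
  | app n f ts ih =>
    simp only [apply_app]
    exact congrArg _ (funext fun i => ih i)

theorem apply_ext {σ σ' : Subst F} {t : Term F} (h : ∀ y, 0 < t.count y → σ y = σ' y) :
    σ.apply t = σ'.apply t := by
  induction t with
  | var x => exact h x (by simp [Term.count])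
  | app n f ts ih =>
    simp only [apply_app]
    refine congrArg _ (funext fun i => ih i fun y hy => h y ?_)
    simp only [Term.count]
    exact Term.count_pos_le_sum hy

theorem apply_tvar (t : Term F) : Subst.apply Term.var t = t := by
  induction t with
  | var x => rfl
  | app n f ts ih =>
    simp only [apply_app]
    exact congrArg _ (funext fun i => ih i)

theorem eq_var_of_apply_eq_var {σ : Subst F} {u : Term F} {z : ℕ}
    (h : σ.apply u = Term.var z) : ∃ w, u = Term.var w := by
  cases u with
  | var w => exact ⟨w, rfl⟩
  | app n f ts => simp [apply_app] at h

theorem apply_fix {σ : Subst F} {t : Term F} (h : σ.apply t = t) :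
    ∀ y, 0 < t.count y → σ y = Term.var y := by
  induction t with
  | var x =>
    intro y hy
    have : x = y := by simp only [Term.count] at hy; split at hy <;> omega
    subst this
    exact h
  | app n f ts ih =>
    intro y hy
    simp only [apply_app, Term.app.injEq, heq_eq_eq, true_and] at h
    simp only [Term.count] at hy
    have : ∃ i, 0 < Term.count y (ts i) := by
      by_contra hc
      push_neg at hc
      have hz : ∀ i : Fin n, Term.count y (ts i) = 0 := fun i => by have := hc i; omega
      simp [Finset.sum_eq_zero (fun i _ => hz i)] at hy
    obtain ⟨i, hi⟩ := this
    exact ih i (congrFun h i) y hi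

/-- The fundamental counting formula. -/
theorem count_apply (σ : Subst F) (t : Term F) (z : ℕ) :
    (σ.apply t).count z = ∑ y ∈ t.varsT, t.count y * (σ y).count z := by
  induction t with
  | var x => simp [apply_var, Term.varsT, Term.count]
  | app n f ts ih =>
    simp only [apply_app, Term.count, Term.varsT]
    calc ∑ i : Fin n, Term.count z (σ.apply (ts i))
        = ∑ i : Fin n, ∑ y ∈ (ts i).varsT, (ts i).count y * (σ y).count z := by
          exact Finset.sum_congr rfl fun i _ => ih i
      _ = ∑ i : Fin n, ∑ y ∈ Finset.univ.biUnion fun j => (ts j).varsT,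
            (ts i).count y * (σ y).count z := by
          refine Finset.sum_congr rfl fun i _ => Finset.sum_subset ?_ ?_
          · intro y hy
            exact Finset.mem_biUnion.mpr ⟨i, Finset.mem_univ i, hy⟩
          · intro y _ hy
            rw [Term.count_eq_zero_of_not_mem hy, zero_mul]
      _ = ∑ y ∈ Finset.univ.biUnion fun j => (ts j).varsT,
            ∑ i : Fin n, (ts i).count y * (σ y).count z := Finset.sum_comm
      _ = ∑ y ∈ Finset.univ.biUnion fun j => (ts j).varsT,
            (∑ i : Fin n, (ts i).count y) * (σ y).count z := by
          exact Finset.sum_congr rfl fun y _ => (Finset.sum_mul ..).symm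

theorem count_apply_pos {σ : Subst F} {t : Term F} {z : ℕ} :
    0 < (σ.apply t).count z ↔ ∃ y, 0 < t.count y ∧ 0 < (σ y).count z := by
  rw [count_apply]
  constructor
  · intro h
    by_contra hc
    push_neg at hc
    have : ∀ y ∈ t.varsT, t.count y * (σ y).count z = 0 := by
      intro y hy
      have h1 := Term.mem_varsT.mp hy
      have h2 : (σ y).count z = 0 := by have := hc y h1; omega
      rw [h2, mul_zero]
    simp [Finset.sum_eq_zero this] at h
  · rintro ⟨y, hy, hz⟩
    have hmem : y ∈ t.varsT := Term.mem_varsT.mpr hy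
    have : 0 < t.count y * (σ y).count z := Nat.mul_pos hy hz
    exact lt_of_lt_of_le this
      (Finset.single_le_sum (f := fun y => t.count y * (σ y).count z)
        (fun j _ => Nat.zero_le _) hmem)

/-- If `t` is linear, images of its variables are linear and pairwise disjoint,
then `σ.apply t` is linear. -/
theorem linear_apply {σ : Subst F} {t : Term F}
    (h1 : ∀ y, t.count y ≤ 1)
    (h2 : ∀ y, 0 < t.count y → ∀ z, (σ y).count z ≤ 1)
    (h3 : ∀ y y', 0 < t.count y → 0 < t.count y' → y ≠ y' →
      ∀ z, 0 < (σ y).count z → (σ y').count z = 0)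
    (z : ℕ) : (σ.apply t).count z ≤ 1 := by
  rw [count_apply]
  by_cases hex : ∃ y ∈ t.varsT, 0 < (σ y).count z
  · obtain ⟨y0, hy0m, hy0⟩ := hex
    rw [Finset.sum_eq_single y0]
    · exact mul_le_one' (h1 y0) (h2 y0 (Term.mem_varsT.mp hy0m) z)
    · intro b hb hbne
      have hbpos := Term.mem_varsT.mp hb
      rw [h3 y0 b (Term.mem_varsT.mp hy0m) hbpos (fun h => hbne h.symm) z hy0, mul_zero]
    · intro h
      exact absurd hy0m h
  · push_neg at hex
    have : ∀ y ∈ t.varsT, t.count y * (σ y).count z = 0 := by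
      intro y hy
      have h0 : (σ y).count z = 0 := by have := hex y hy; omega
      rw [h0, mul_zero]
    rw [Finset.sum_eq_zero this]
    exact Nat.zero_le 1

theorem sizeT_apply_le {σ : Subst F} {t : Term F} {v : ℕ} (h : 0 < t.count v) :
    (σ v).sizeT ≤ (σ.apply t).sizeT := by
  induction t with
  | var x =>
    have : x = v := by simp only [Term.count] at h; split at h <;> omega
    subst this
    simp [apply_var, le_refl]
  | app n f ts ih =>
    simp only [Term.count] at h
    have : ∃ i, 0 < Term.count v (ts i) := by
      by_contra hc
      push_neg at hc
      have hz : ∀ i : Fin n, Term.count v (ts i) = 0 := fun i => by have := hc i; omega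
      simp [Finset.sum_eq_zero (fun i _ => hz i)] at h
    obtain ⟨i, hi⟩ := this
    calc (σ v).sizeT ≤ (σ.apply (ts i)).sizeT := ih i hi
      _ ≤ ∑ j : Fin n, (σ.apply (ts j)).sizeT :=
          Finset.single_le_sum (f := fun j => (σ.apply (ts j)).sizeT)
            (fun j _ => Nat.zero_le _) (Finset.mem_univ i)
      _ ≤ (σ.apply (.app n f ts)).sizeT := by
          simp [apply_app, Term.sizeT]

theorem occurs_check {σ : Subst F} {r : Term F} {v : ℕ}
    (hocc : 0 < r.count v) (h : σ v = σ.apply r) : r = Term.var v := by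
  cases r with
  | var w =>
    have : w = v := by simp only [Term.count] at hocc; split at hocc <;> omega
    subst this; rfl
  | app n f ts =>
    exfalso
    simp only [Term.count] at hocc
    have : ∃ i, 0 < Term.count v (ts i) := by
      by_contra hc
      push_neg at hc
      have hz : ∀ i : Fin n, Term.count v (ts i) = 0 := fun i => by have := hc i; omega
      simp [Finset.sum_eq_zero (fun i _ => hz i)] at hocc
    obtain ⟨i, hi⟩ := this
    have h1 : (σ v).sizeT ≤ (σ.apply (ts i)).sizeT := sizeT_apply_le hi
    have h2 : (σ.apply (.app n f ts)).sizeT = 1 + ∑ j : Fin n, (σ.apply (ts j)).sizeT := by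
      simp [apply_app, Term.sizeT]
    have h3 : (σ.apply (ts i)).sizeT ≤ ∑ j : Fin n, (σ.apply (ts j)).sizeT :=
      Finset.single_le_sum (f := fun j => (σ.apply (ts j)).sizeT)
        (fun j _ => Nat.zero_le _) (Finset.mem_univ i)
    have h4 : (σ v).sizeT = (σ.apply (.app n f ts)).sizeT := by rw [h]
    omega

end Subst

end Stmt0Aux

section Stmt0Lists

variable {F : ℕ → Type}

/-- The substitution binding `v` to `r`. -/
noncomputable def esub (v : ℕ) (r : Term F) : Subst F := fun u => if u = v then r else .var u

theorem esub_self (v : ℕ) (r : Term F) : esub v r v = r := if_pos rfl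

theorem esub_ne {v u : ℕ} (r : Term F) (h : u ≠ v) : esub v r u = .var u := if_neg h

theorem isSubst_esub (v : ℕ) (r : Term F) : Subst.IsSubst (esub v r) := by
  apply Set.Finite.subset (Set.finite_singleton v)
  intro z hz
  simp only [Subst.dom, Set.mem_setOf_eq] at hz
  by_contra h
  exact hz (esub_ne r h)

theorem isSubst_comp {σ η : Subst F} (h1 : Subst.IsSubst σ) (h2 : Subst.IsSubst η) :
    Subst.IsSubst (Subst.comp σ η) := by
  apply Set.Finite.subset (h1.union h2)
  intro z hz
  simp only [Subst.dom, Set.mem_setOf_eq] at hz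
  by_contra h
  simp only [Set.mem_union, Subst.dom, Set.mem_setOf_eq, not_or, not_not] at h
  exact hz (by simp only [Subst.comp, h.2, Subst.apply_var, h.1])

theorem count_esub_apply {v : ℕ} {r : Term F} (hocc : r.count v = 0) :
    ∀ (u : Term F) (z : ℕ),
      ((esub v r).apply u).count z = (if z = v then 0 else u.count z) + u.count v * r.count z := by
  intro u
  induction u with
  | var y =>
    intro z
    rcases eq_or_ne y v with hy | hy
    · subst hy
      rw [Subst.apply_var, esub_self]
      rcases eq_or_ne z y with hz | hz
      · subst hz; simp [Term.count, hocc]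
      · simp [Term.count, hz, Ne.symm hz]
    · rw [Subst.apply_var, esub_ne r hy]
      rcases eq_or_ne z v with hz | hz
      · subst hz
        have h1 : Term.count z (Term.var y : Term F) = 0 := by
          simp [Term.count]; omega
        simp [h1]
      · have h2 : Term.count v (Term.var y : Term F) = 0 := by
          simp [Term.count]; omega
        simp [h2, hz]
  | app n f ts ih =>
    intro z
    simp only [Subst.apply_app, Term.count]
    rw [Finset.sum_congr rfl fun i _ => ih i z]
    rw [Finset.sum_add_distrib, ← Finset.sum_mul]
    rcases eq_or_ne z v with hz | hz <;> simp [hz]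

theorem esub_apply_of_notmem {v : ℕ} {r u : Term F} (h : u.count v = 0) :
    (esub v r).apply u = u := by
  have : (esub v r).apply u = Subst.apply Term.var u := by
    apply Subst.apply_ext
    intro y hy
    apply esub_ne
    intro hyv
    subst hyv
    omega
  rw [this, Subst.apply_tvar]

/-- Lists of equations. -/
abbrev Eqs (F : ℕ → Type) := List (Term F × Term F)

def unifL (E : Eqs F) : Set (Subst F) :=
  {θ | Subst.IsSubst θ ∧ ∀ p ∈ E, θ.apply p.1 = θ.apply p.2}

def mguL (E : Eqs F) : Set (Subst F) :=
  {θ ∈ unifL E | ∀ ψ ∈ unifL E, θ.Le ψ}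

theorem mguL_congr {E₁ E₂ : Eqs F} (h : unifL E₁ = unifL E₂) : mguL E₁ = mguL E₂ := by
  simp [mguL, h]

/-- right-hand-side occurrence count. -/
def rcount (y : ℕ) : Eqs F → ℕ
  | [] => 0
  | p :: E => p.2.count y + rcount y E

def sizeE : Eqs F → ℕ
  | [] => 0
  | p :: E => p.1.sizeT + p.2.sizeT + sizeE E

def varsE : Eqs F → Finset ℕ
  | [] => ∅
  | p :: E => p.1.varsT ∪ p.2.varsT ∪ varsE E

theorem mem_varsE {y : ℕ} : ∀ {E : Eqs F},
    y ∈ varsE E ↔ ∃ p ∈ E, 0 < p.1.count y + p.2.count y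
  | [] => by simp [varsE]
  | p :: E => by
    simp only [varsE, Finset.mem_union, Term.mem_varsT, List.mem_cons]
    rw [mem_varsE (E := E)]
    constructor
    · rintro ((h | h) | ⟨q, hq, hc⟩)
      · exact ⟨p, Or.inl rfl, by omega⟩
      · exact ⟨p, Or.inl rfl, by omega⟩
      · exact ⟨q, Or.inr hq, hc⟩
    · rintro ⟨q, (rfl | hq), hc⟩
      · rcases Nat.lt_or_ge 0 (q.1.count y) with h | h
        · exact Or.inl (Or.inl h)
        · exact Or.inl (Or.inr (by omega))
      · exact Or.inr ⟨q, hq, hc⟩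

noncomputable def substE (v : ℕ) (r : Term F) (E : Eqs F) : Eqs F :=
  E.map fun p => ((esub v r).apply p.1, (esub v r).apply p.2)

theorem rcount_substE {v : ℕ} {r : Term F} (hocc : r.count v = 0) (y : ℕ) :
    ∀ E : Eqs F, rcount y (substE v r E)
      = (if y = v then 0 else rcount y E) + rcount v E * r.count y
  | [] => by simp [substE, rcount]
  | p :: E => by
    have ih := rcount_substE hocc y E
    simp only [substE, List.map_cons, rcount] at *
    rw [count_esub_apply hocc, ih]
    rcases eq_or_ne y v with h | h <;> simp [h] <;> ring

theorem mem_varsE_substE {v : ℕ} {r : Term F} (hocc : r.count v = 0) {y : ℕ} {E : Eqs F}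
    (h : y ∈ varsE (substE v r E)) :
    y ≠ v ∧ (y ∈ varsE E ∨ 0 < r.count y) := by
  rw [mem_varsE] at h
  obtain ⟨q, hq, hc⟩ := h
  simp only [substE, List.mem_map] at hq
  obtain ⟨p, hp, rfl⟩ := hq
  simp only [count_esub_apply hocc] at hc
  have hry : 0 < r.count y ∨ (y ≠ v ∧ 0 < p.1.count y + p.2.count y) := by
    rcases eq_or_ne y v with hyv | hyv
    · subst hyv
      simp only [if_pos rfl] at hc
      rcases Nat.eq_zero_or_pos (r.count y) with h0 | h0
      · rw [h0] at hc; simp at hc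
      · exact Or.inl h0
    · simp only [if_neg hyv] at hc
      rcases Nat.eq_zero_or_pos (r.count y) with h0 | h0
      · rw [h0] at hc; simp at hc; exact Or.inr ⟨hyv, by omega⟩
      · exact Or.inl h0
  constructor
  · intro hyv
    subst hyv
    rcases hry with h0 | ⟨h1, _⟩
    · omega
    · exact h1 rfl
  · rcases hry with h0 | ⟨_, h1⟩
    · exact Or.inr h0
    · exact Or.inl (mem_varsE.mpr ⟨p, hp, h1⟩)

/-- Linearity/disjointness of a substitution on a class of variables. -/
def LinOn (θ : Subst F) (P : ℕ → Prop) : Prop :=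
  (∀ x, P x → ∀ z, (θ x).count z ≤ 1) ∧
  (∀ x x', P x → P x' → x ≠ x' → ∀ z, 0 < (θ x).count z → (θ x').count z = 0)

theorem LinOn.mono {θ : Subst F} {P Q : ℕ → Prop} (h : ∀ x, P x → Q x)
    (hl : LinOn θ Q) : LinOn θ P :=
  ⟨fun x hx => hl.1 x (h x hx), fun x x' hx hx' => hl.2 x x' (h x hx) (h x' hx')⟩

/-- Any two mgus are variants: there are `δ, δ'` with `θ = δ ∘ μ` and `δ` acting as an
injective variable renaming on all variables occurring in images of `μ`. -/
theorem mgu_variant {E : Eqs F} {θ μ : Subst F} (hθ : θ ∈ mguL E) (hμ : μ ∈ mguL E) :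
    ∃ δ δ' : Subst F, (∀ u, θ u = δ.apply (μ u)) ∧
      (∀ y, (∃ u, 0 < (μ u).count y) → ∃ z, δ y = .var z ∧ δ' z = .var y) := by
  obtain ⟨δ, hδS, hθeq⟩ := hμ.2 θ hθ.1
  obtain ⟨δ', hδ'S, hμeq⟩ := hθ.2 μ hμ.1
  refine ⟨δ, δ', fun u => by rw [hθeq]; rfl, ?_⟩
  rintro y ⟨u, hu⟩
  have hfix : (Subst.comp δ' δ).apply (μ u) = μ u := by
    rw [Subst.apply_comp]
    have h1 : δ.apply (μ u) = θ u := by rw [hθeq]; rfl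
    have h2 : δ'.apply (θ u) = μ u := by rw [hμeq]; rfl
    rw [h1, h2]
  have := Subst.apply_fix hfix y hu
  have hvar : δ'.apply (δ y) = Term.var y := this
  obtain ⟨z, hz⟩ := Subst.eq_var_of_apply_eq_var hvar
  refine ⟨z, hz, ?_⟩
  rw [hz] at hvar
  exact hvar

theorem linOn_transfer {E : Eqs F} {θ μ : Subst F} (hθ : θ ∈ mguL E) (hμ : μ ∈ mguL E)
    {P : ℕ → Prop} (h : LinOn μ P) : LinOn θ P := by
  obtain ⟨δ, δ', heq, hvar⟩ := mgu_variant hθ hμ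
  constructor
  · intro x hx z
    rw [heq x]
    apply Subst.linear_apply (h.1 x hx)
    · intro y hy z'
      obtain ⟨w, hw, _⟩ := hvar y ⟨x, hy⟩
      rw [hw]
      simp [Term.count]
      split <;> omega
    · intro y y' hy hy' hne z' hz'
      obtain ⟨w, hw, hw'⟩ := hvar y ⟨x, hy⟩
      obtain ⟨w2, hw2, hw2'⟩ := hvar y' ⟨x, hy'⟩
      rw [hw2]
      rw [hw] at hz'
      have hzw : z' = w := by
        simp only [Term.count] at hz'; split at hz' <;> omega
      subst hzw
      have : w2 ≠ z' := by
        intro hc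
        subst hc
        rw [hw'] at hw2'
        exact hne (Term.var.inj hw2')
      simp [Term.count]
      omega
  · intro x x' hx hx' hne z hz
    rw [heq x] at hz
    rw [heq x']
    by_contra hc
    have hc' : 0 < (δ.apply (μ x')).count z := Nat.pos_of_ne_zero hc
    obtain ⟨y, hy, hyz⟩ := Subst.count_apply_pos.mp hz
    obtain ⟨y', hy', hyz'⟩ := Subst.count_apply_pos.mp hc'
    obtain ⟨w, hw, hwi⟩ := hvar y ⟨x, hy⟩
    obtain ⟨w2, hw2, hw2i⟩ := hvar y' ⟨x', hy'⟩
    rw [hw] at hyz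
    rw [hw2] at hyz'
    have h1 : w = z := by simp only [Term.count] at hyz; split at hyz <;> omega
    have h2 : w2 = z := by simp only [Term.count] at hyz'; split at hyz' <;> omega
    subst h1; subst h2
    have : y = y' := by
      rw [hwi] at hw2i
      exact Term.var.inj hw2i
    subst this
    have := h.2 x x' hx hx' hne y hy
    omega

end Stmt0Lists

section Stmt0Main

variable {F : ℕ → Type}

theorem rcount_append (y : ℕ) : ∀ A B : Eqs F, rcount y (A ++ B) = rcount y A + rcount y B
  | [], B => by simp [rcount]
  | p :: A, B => by simp [rcount, rcount_append y A B]; omega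

theorem sizeE_append : ∀ A B : Eqs F, sizeE (A ++ B) = sizeE A + sizeE B
  | [], B => by simp [sizeE]
  | p :: A, B => by simp [sizeE, sizeE_append A B]; omega

theorem rcount_eq_sum_map (y : ℕ) : ∀ L : Eqs F, rcount y L = (L.map fun p => p.2.count y).sum
  | [] => rfl
  | p :: L => by simp [rcount, rcount_eq_sum_map y L]

theorem sizeE_eq_sum_map : ∀ L : Eqs F, sizeE L = (L.map fun p => p.1.sizeT + p.2.sizeT).sum
  | [] => rfl
  | p :: L => by simp [sizeE, sizeE_eq_sum_map L]

theorem comp_esub_eq {σ : Subst F} {v : ℕ} {r : Term F} (hv : σ v = σ.apply r) :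
    Subst.comp σ (esub v r) = σ := by
  funext z
  rcases eq_or_ne z v with rfl | hz
  · show σ.apply (esub z r z) = σ z
    rw [esub_self, ← hv]
  · show σ.apply (esub v r z) = σ z
    rw [esub_ne r hz, Subst.apply_var]

theorem mem_unifL_substE {v : ℕ} {r : Term F} {E' : Eqs F} {σ : Subst F}
    (hσS : Subst.IsSubst σ) (hv : σ v = σ.apply r)
    (hE' : ∀ p ∈ E', σ.apply p.1 = σ.apply p.2) : σ ∈ unifL (substE v r E') := by
  refine ⟨hσS, ?_⟩
  intro p hp
  simp only [substE, List.mem_map] at hp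
  obtain ⟨q, hq, rfl⟩ := hp
  have h1 : σ.apply ((esub v r).apply q.1) = σ.apply q.1 := by
    rw [← Subst.apply_comp, comp_esub_eq hv]
  have h2 : σ.apply ((esub v r).apply q.2) = σ.apply q.2 := by
    rw [← Subst.apply_comp, comp_esub_eq hv]
  show σ.apply ((esub v r).apply q.1) = σ.apply ((esub v r).apply q.2)
  rw [h1, h2]
  exact hE' q hq

theorem mgu_elim {v : ℕ} {r : Term F} {E E' : Eqs F} (hocc : r.count v = 0)
    (hE : ∀ ψ : Subst F, ψ ∈ unifL E ↔
      (Subst.IsSubst ψ ∧ ψ v = ψ.apply r ∧ ∀ p ∈ E', ψ.apply p.1 = ψ.apply p.2))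
    {μ' : Subst F} (hμ' : μ' ∈ mguL (substE v r E')) :
    Subst.comp μ' (esub v r) ∈ mguL E := by
  have hηr : (esub v r).apply r = r := esub_apply_of_notmem hocc
  constructor
  · rw [hE]
    refine ⟨isSubst_comp hμ'.1.1 (isSubst_esub v r), ?_, ?_⟩
    · show μ'.apply (esub v r v) = (Subst.comp μ' (esub v r)).apply r
      rw [esub_self, Subst.apply_comp, hηr]
    · intro p hp
      rw [Subst.apply_comp, Subst.apply_comp]
      exact hμ'.1.2 _ (List.mem_map_of_mem hp)
  · intro ψ hψ
    rw [hE] at hψ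
    obtain ⟨hψS, hψv, hψE'⟩ := hψ
    obtain ⟨δ, hδS, hc⟩ := hμ'.2 ψ (mem_unifL_substE hψS hψv hψE')
    refine ⟨δ, hδS, funext fun z => ?_⟩
    show ψ z = δ.apply (μ'.apply (esub v r z))
    have h1 : δ.apply (μ'.apply (esub v r z)) = (Subst.comp δ μ').apply (esub v r z) :=
      (Subst.apply_comp δ μ' _).symm
    rw [h1, ← hc]
    rcases eq_or_ne z v with rfl | hz
    · rw [esub_self]
      exact hψv
    · rw [esub_ne r hz, Subst.apply_var]

theorem main_aux :
    ∀ vb : ℕ, ∀ sb : ℕ, ∀ E : Eqs F, (varsE E).card ≤ vb → sizeE E ≤ sb →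
      (∀ y, rcount y E ≤ 1) → (unifL E).Nonempty →
      (mguL E).Nonempty ∧ ∀ θ ∈ mguL E, LinOn θ (fun x => rcount x E = 0) := by
  intro vb
  induction vb using Nat.strong_induction_on with
  | _ vb ihv =>
  intro sb
  induction sb using Nat.strong_induction_on with
  | _ sb ihs =>
  intro E hvb hsb hgood hne
  obtain ⟨σ, hσ⟩ := hne
  have hσS : Subst.IsSubst σ := hσ.1
  cases E with
  | nil =>
    -- base case: identity is an mgu
    have hid : (Term.var : Subst F) ∈ mguL ([] : Eqs F) := by
      refine ⟨⟨?_, by simp⟩, ?_⟩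
      · show (Subst.dom (Term.var : Subst F)).Finite
        have hdom : Subst.dom (Term.var : Subst F) = ∅ := by
          ext z; simp [Subst.dom]
        rw [hdom]; exact Set.finite_empty
      · intro ψ hψ
        exact ⟨ψ, hψ.1, funext fun z => rfl⟩
    refine ⟨⟨_, hid⟩, fun θ hθ => linOn_transfer hθ hid ⟨?_, ?_⟩⟩
    · intro x _ z
      simp only [Term.count]
      split <;> omega
    · intro x x' _ _ hne z hz
      have hxz : x = z := by simp only [Term.count] at hz; split at hz <;> omega
      subst hxz
      simp only [Term.count]
      rw [if_neg]
      intro h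
      exact hne h.symm
  | cons p E' =>
    obtain ⟨l, r⟩ := p
    have hlr : σ.apply l = σ.apply r := hσ.2 (l, r) (List.mem_cons_self)
    have hσE' : ∀ q ∈ E', σ.apply q.1 = σ.apply q.2 :=
      fun q hq => hσ.2 q (List.mem_cons_of_mem _ hq)
    have hgood' : ∀ y, rcount y E' ≤ 1 := by
      intro y
      have := hgood y
      simp only [rcount] at this
      omega
    cases l with
    | var v =>
      by_cases hr : r = Term.var v
      · -- DELETE case
        subst hr
        have hu : unifL ((Term.var v, Term.var v) :: E') = unifL E' := by
          ext ψ
          simp [unifL, List.forall_mem_cons]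
        have hsub : varsE E' ⊆ varsE ((Term.var v, Term.var v) :: E') := by
          intro y hy
          rw [mem_varsE] at hy ⊢
          obtain ⟨q, hq, hc⟩ := hy
          exact ⟨q, List.mem_cons_of_mem _ hq, hc⟩
        have hsz : sizeE E' + 2 = sizeE ((Term.var v, Term.var v) :: E') := by
          simp [sizeE, Term.sizeT]; omega
        obtain ⟨hex, hcl⟩ := ihs (sizeE E') (by omega) E'
          (le_trans (Finset.card_le_card hsub) hvb) le_rfl hgood' ⟨σ, hσS, hσE'⟩
        rw [mguL_congr hu]
        refine ⟨hex, fun θ hθ => LinOn.mono ?_ (hcl θ hθ)⟩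
        intro x hx
        simp only [rcount] at hx
        omega
      · -- ELIM-LEFT case
        have hσv : σ v = σ.apply r := hlr
        have hocc : r.count v = 0 := by
          by_contra h
          exact hr (Subst.occurs_check (Nat.pos_of_ne_zero h) hσv)
        set E := (Term.var v, r) :: E' with hEdef
        have hF0 : ∀ y, rcount y E = r.count y + rcount y E' := fun y => rfl
        have hEiff : ∀ ψ : Subst F, ψ ∈ unifL E ↔
            (Subst.IsSubst ψ ∧ ψ v = ψ.apply r ∧ ∀ p ∈ E', ψ.apply p.1 = ψ.apply p.2) := by
          intro ψ
          constructor
          · rintro ⟨hS, h⟩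
            rw [List.forall_mem_cons] at h
            exact ⟨hS, h.1, h.2⟩
          · rintro ⟨hS, h1, h2⟩
            exact ⟨hS, List.forall_mem_cons.mpr ⟨h1, h2⟩⟩
        have hσ'' : σ ∈ unifL (substE v r E') := mem_unifL_substE hσS hσv hσE'
        have hvE : v ∈ varsE E := by
          rw [mem_varsE]
          exact ⟨(Term.var v, r), List.mem_cons_self, by simp [Term.count]⟩
        have hsubset : varsE (substE v r E') ⊆ varsE E := by
          intro y hy
          obtain ⟨hyv, hy2⟩ := mem_varsE_substE hocc hy
          rcases hy2 with h | h
          · rw [mem_varsE] at h ⊢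
            obtain ⟨q, hq, hc⟩ := h
            exact ⟨q, List.mem_cons_of_mem _ hq, hc⟩
          · rw [mem_varsE]
            refine ⟨(Term.var v, r), List.mem_cons_self, ?_⟩
            show 0 < (Term.var v : Term F).count y + r.count y
            omega
        have hvnot : v ∉ varsE (substE v r E') := fun h => (mem_varsE_substE hocc h).1 rfl
        have hlt : (varsE (substE v r E')).card < (varsE E).card :=
          Finset.card_lt_card ((Finset.ssubset_iff_of_subset hsubset).mpr ⟨v, hvE, hvnot⟩)
        have hgood'' : ∀ y, rcount y (substE v r E') ≤ 1 := by
          intro y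
          rw [rcount_substE hocc]
          have h1 := hgood y
          have h2 := hgood v
          rw [hF0 y] at h1
          rw [hF0 v] at h2
          rw [hocc] at h2
          rcases eq_or_ne y v with rfl | hyv
          · rw [if_pos rfl, hocc, mul_zero]
            omega
          · rw [if_neg hyv]
            have : rcount v E' * r.count y = 0 ∨ rcount v E' * r.count y = r.count y := by
              rcases Nat.le_one_iff_eq_zero_or_eq_one.mp (by omega : rcount v E' ≤ 1) with h | h
              · left; rw [h, zero_mul]
              · right; rw [h, one_mul]
            omega
        obtain ⟨⟨μ', hμ'⟩, hcl''⟩ := ihv (varsE (substE v r E')).card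
          (lt_of_lt_of_le hlt hvb) (sizeE (substE v r E')) (substE v r E')
          le_rfl le_rfl hgood'' ⟨σ, hσ''⟩
        have hclμ' := hcl'' μ' hμ'
        have hμmgu : Subst.comp μ' (esub v r) ∈ mguL E := mgu_elim hocc hEiff hμ'
        have hμv : Subst.comp μ' (esub v r) v = μ'.apply r := by
          show μ'.apply (esub v r v) = μ'.apply r
          rw [esub_self]
        have hμx : ∀ x, x ≠ v → Subst.comp μ' (esub v r) x = μ' x := by
          intro x hx
          show μ'.apply (esub v r x) = μ' x
          rw [esub_ne r hx, Subst.apply_var]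
        have hP0 : ∀ x, rcount x E = 0 → rcount x (substE v r E') = 0 := by
          intro x hx
          rw [hF0 x] at hx
          rw [rcount_substE hocc]
          have hcx : r.count x = 0 := by omega
          have hrx : rcount x E' = 0 := by omega
          rw [hcx, mul_zero, add_zero]
          rcases eq_or_ne x v with h | h
          · rw [if_pos h]
          · rw [if_neg h]; exact hrx
        have hPr : rcount v E' = 0 → ∀ u, 0 < r.count u → rcount u (substE v r E') = 0 := by
          intro h0 u hu
          have huv : u ≠ v := fun h => by rw [h] at hu; omega
          have h1 := hgood u
          rw [hF0 u] at h1
          rw [rcount_substE hocc, if_neg huv, h0, zero_mul]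
          omega
        have hgood1 : ∀ y, r.count y ≤ 1 := by
          intro y
          have := hgood y
          rw [hF0 y] at this
          omega
        have hLin : LinOn (Subst.comp μ' (esub v r)) (fun x => rcount x E = 0) := by
          constructor
          · intro x hx z
            rcases eq_or_ne x v with hxv | hxv
            · rw [hxv, hμv]
              have hrv0 : rcount v E' = 0 := by
                have h1 := hF0 v
                rw [hxv] at hx
                rw [hocc] at h1
                omega
              apply Subst.linear_apply hgood1
              · intro y hy z'
                exact hclμ'.1 y (hPr hrv0 y hy) z'
              · intro y y' hy hy' hne z' hz'
                exact hclμ'.2 y y' (hPr hrv0 y hy) (hPr hrv0 y' hy') hne z' hz'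
            · rw [hμx x hxv]
              exact hclμ'.1 x (hP0 x hx) z
          · intro x x' hx hx' hnexy z hz
            rcases eq_or_ne x v with hxv | hxv
            · have hrv0 : rcount v E' = 0 := by
                have h1 := hF0 v
                rw [hxv] at hx
                rw [hocc] at h1
                omega
              rw [hxv, hμv] at hz
              have hx'v : x' ≠ v := fun h => hnexy (hxv.trans h.symm)
              rw [hμx x' hx'v]
              obtain ⟨y, hy, hyz⟩ := Subst.count_apply_pos.mp hz
              have hyx' : y ≠ x' := by
                intro h
                rw [h] at hy
                have h2 := hF0 x'
                omega
              exact hclμ'.2 y x' (hPr hrv0 y hy) (hP0 x' hx') hyx' z hyz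
            · rcases eq_or_ne x' v with hx'v | hx'v
              · have hrv0 : rcount v E' = 0 := by
                  have h1 := hF0 v
                  rw [hx'v] at hx'
                  rw [hocc] at h1
                  omega
                rw [hx'v, hμv]
                rw [hμx x hxv] at hz
                by_contra hc
                obtain ⟨y, hy, hyz⟩ := Subst.count_apply_pos.mp (Nat.pos_of_ne_zero hc)
                have hxy : x ≠ y := by
                  intro h
                  rw [← h] at hy
                  have h2 := hF0 x
                  omega
                have := hclμ'.2 x y (hP0 x hx) (hPr hrv0 y hy) hxy z hz
                omega
              · rw [hμx x hxv] at hz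
                rw [hμx x' hx'v]
                exact hclμ'.2 x x' (hP0 x hx) (hP0 x' hx') hnexy z hz
        exact ⟨⟨_, hμmgu⟩, fun θ hθ => linOn_transfer hθ hμmgu hLin⟩
    | app n fs ts =>
      cases r with
      | var w =>
        -- ELIM-RIGHT case
        set L := Term.app n fs ts with hLdef
        have hσw : σ w = σ.apply L := hlr.symm
        have hocc : L.count w = 0 := by
          by_contra h
          have := Subst.occurs_check (Nat.pos_of_ne_zero h) hσw
          rw [hLdef] at this
          exact absurd this (by intro hcon; cases hcon)
        set E := (L, Term.var w) :: E' with hEdef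
        have hF0 : ∀ y, rcount y E = (Term.var w : Term F).count y + rcount y E' :=
          fun y => rfl
        have hEiff : ∀ ψ : Subst F, ψ ∈ unifL E ↔
            (Subst.IsSubst ψ ∧ ψ w = ψ.apply L ∧ ∀ p ∈ E', ψ.apply p.1 = ψ.apply p.2) := by
          intro ψ
          constructor
          · rintro ⟨hS, h⟩
            rw [List.forall_mem_cons] at h
            exact ⟨hS, h.1.symm, h.2⟩
          · rintro ⟨hS, h1, h2⟩
            exact ⟨hS, List.forall_mem_cons.mpr ⟨h1.symm, h2⟩⟩
        have hσ'' : σ ∈ unifL (substE w L E') := mem_unifL_substE hσS hσw hσE'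
        have hwE : w ∈ varsE E := by
          rw [mem_varsE]
          exact ⟨(L, Term.var w), List.mem_cons_self, by simp [Term.count]⟩
        have hsubset : varsE (substE w L E') ⊆ varsE E := by
          intro y hy
          obtain ⟨hyw, hy2⟩ := mem_varsE_substE hocc hy
          rcases hy2 with h | h
          · rw [mem_varsE] at h ⊢
            obtain ⟨q, hq, hc⟩ := h
            exact ⟨q, List.mem_cons_of_mem _ hq, hc⟩
          · rw [mem_varsE]
            refine ⟨(L, Term.var w), List.mem_cons_self, ?_⟩
            show 0 < L.count y + (Term.var w : Term F).count y
            omega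
        have hwnot : w ∉ varsE (substE w L E') := fun h => (mem_varsE_substE hocc h).1 rfl
        have hlt : (varsE (substE w L E')).card < (varsE E).card :=
          Finset.card_lt_card ((Finset.ssubset_iff_of_subset hsubset).mpr ⟨w, hwE, hwnot⟩)
        have hcw : (Term.var w : Term F).count w = 1 := by simp [Term.count]
        have hrw' : rcount w E' = 0 := by
          have := hgood w
          rw [hF0 w, hcw] at this
          omega
        have hrc'' : ∀ y, rcount y (substE w L E') = if y = w then 0 else rcount y E' := by
          intro y
          rw [rcount_substE hocc, hrw', zero_mul, add_zero]
        have hgood'' : ∀ y, rcount y (substE w L E') ≤ 1 := by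
          intro y
          rw [hrc'' y]
          rcases eq_or_ne y w with rfl | hyw
          · simp
          · rw [if_neg hyw]
            exact hgood' y
        obtain ⟨⟨μ', hμ'⟩, hcl''⟩ := ihv (varsE (substE w L E')).card
          (lt_of_lt_of_le hlt hvb) (sizeE (substE w L E')) (substE w L E')
          le_rfl le_rfl hgood'' ⟨σ, hσ''⟩
        have hclμ' := hcl'' μ' hμ'
        have hμmgu : Subst.comp μ' (esub w L) ∈ mguL E := mgu_elim hocc hEiff hμ'
        have hμx : ∀ x, x ≠ w → Subst.comp μ' (esub w L) x = μ' x := by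
          intro x hx
          show μ'.apply (esub w L x) = μ' x
          rw [esub_ne L hx, Subst.apply_var]
        have hP0 : ∀ x, rcount x E = 0 → x ≠ w ∧ rcount x (substE w L E') = 0 := by
          intro x hx
          rw [hF0 x] at hx
          have hxw : x ≠ w := by
            intro h
            subst h
            rw [hcw] at hx
            omega
          refine ⟨hxw, ?_⟩
          rw [hrc'' x, if_neg hxw]
          omega
        have hLin : LinOn (Subst.comp μ' (esub w L)) (fun x => rcount x E = 0) := by
          constructor
          · intro x hx z
            obtain ⟨hxw, h0⟩ := hP0 x hx
            rw [hμx x hxw]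
            exact hclμ'.1 x h0 z
          · intro x x' hx hx' hnexy z hz
            obtain ⟨hxw, h0⟩ := hP0 x hx
            obtain ⟨hx'w, h0'⟩ := hP0 x' hx'
            rw [hμx x hxw] at hz
            rw [hμx x' hx'w]
            exact hclμ'.2 x x' h0 h0' hnexy z hz
        exact ⟨⟨_, hμmgu⟩, fun θ hθ => linOn_transfer hθ hμmgu hLin⟩
      | app m gs us =>
        -- DECOMPOSE case
        simp only [Subst.apply_app] at hlr
        injection hlr with h1 h2 h3
        subst h1
        have hf : fs = gs := eq_of_heq h2
        subst hf
        set E'' := (List.ofFn fun i : Fin n => (ts i, us i)) ++ E' with hE''def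
        have happ : ∀ ψ : Subst F,
            (ψ.apply (.app n fs ts) = ψ.apply (.app n fs us)) ↔
            ∀ i, ψ.apply (ts i) = ψ.apply (us i) := by
          intro ψ
          simp only [Subst.apply_app, Term.app.injEq, heq_eq_eq, true_and]
          constructor
          · intro h i
            exact congrFun h i
          · intro h
            exact funext h
        have hu : unifL ((Term.app n fs ts, Term.app n fs us) :: E') = unifL E'' := by
          ext ψ
          simp only [unifL, Set.mem_setOf_eq, List.forall_mem_cons, hE''def,
            List.forall_mem_append]
          rw [happ ψ]
          constructor
          · rintro ⟨hS, hh, hrest⟩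
            refine ⟨hS, ?_, hrest⟩
            intro q hq
            rw [List.mem_ofFn] at hq
            obtain ⟨i, rfl⟩ := hq
            exact hh i
          · rintro ⟨hS, hh, hrest⟩
            exact ⟨hS, fun i => hh _ (by rw [List.mem_ofFn]; exact ⟨i, rfl⟩), hrest⟩
        have hrc : ∀ y, rcount y E'' = rcount y ((Term.app n fs ts, Term.app n fs us) :: E') := by
          intro y
          rw [hE''def, rcount_append]
          have hofn : rcount y (List.ofFn fun i : Fin n => (ts i, us i))
              = ∑ i : Fin n, (us i).count y := by
            rw [rcount_eq_sum_map, List.map_ofFn, List.sum_ofFn]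
            rfl
          rw [hofn]
          show _ = (Term.app n fs us : Term F).count y + rcount y E'
          simp only [Term.count]
        have hsz : sizeE E'' + 2 = sizeE ((Term.app n fs ts, Term.app n fs us) :: E') := by
          rw [hE''def, sizeE_append]
          have hofn : sizeE (List.ofFn fun i : Fin n => (ts i, us i))
              = ∑ i : Fin n, ((ts i).sizeT + (us i).sizeT) := by
            rw [sizeE_eq_sum_map, List.map_ofFn, List.sum_ofFn]
            rfl
          rw [hofn]
          show _ = ((Term.app n fs ts : Term F).sizeT + (Term.app n fs us : Term F).sizeT
            + sizeE E')
          simp only [Term.sizeT, Finset.sum_add_distrib]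
          omega
        have hsub : varsE E'' ⊆ varsE ((Term.app n fs ts, Term.app n fs us) :: E') := by
          intro y hy
          rw [mem_varsE] at hy ⊢
          obtain ⟨q, hq, hc⟩ := hy
          rw [hE''def, List.mem_append] at hq
          rcases hq with hq | hq
          · rw [List.mem_ofFn] at hq
            obtain ⟨i, rfl⟩ := hq
            refine ⟨(Term.app n fs ts, Term.app n fs us), List.mem_cons_self, ?_⟩
            simp only [Term.count] at hc ⊢
            rcases Nat.lt_or_ge 0 ((ts i).count y) with h | h
            · have := Term.count_pos_le_sum (ts := ts) (y := y) (i := i) h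
              omega
            · have hpos : 0 < (us i).count y := by omega
              have := Term.count_pos_le_sum (ts := us) (y := y) (i := i) hpos
              omega
          · exact ⟨q, List.mem_cons_of_mem _ hq, hc⟩
        have hgood'' : ∀ y, rcount y E'' ≤ 1 := by
          intro y
          rw [hrc y]
          exact hgood y
        obtain ⟨hex, hcl⟩ := ihs (sizeE E'') (by omega) E''
          (le_trans (Finset.card_le_card hsub) hvb) le_rfl hgood''
          ⟨σ, hu ▸ hσ⟩
        rw [mguL_congr hu]
        refine ⟨hex, fun θ hθ => LinOn.mono ?_ (hcl θ hθ)⟩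
        intro x hx
        rw [hrc x]
        exact hx

end Stmt0Main

section Stmt0Assembly

variable {F : ℕ → Type}

theorem unif_pair_eq (s t : Term F) : unif ({(s, t)} : Set (Term F × Term F)) = unifL [(s, t)] := by
  ext σ
  simp [unif, unifL]

theorem mgu_pair_eq (s t : Term F) : mgu ({(s, t)} : Set (Term F × Term F)) = mguL [(s, t)] := by
  simp only [mgu, mguL, unif_pair_eq]

theorem unifL_swap (s t : Term F) : unifL [(t, s)] = unifL [(s, t)] := by
  ext σ
  simp only [unifL, Set.mem_setOf_eq, List.forall_mem_singleton]
  exact and_congr_right fun _ => eq_comm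

/-- the core of statement 0 in the asymmetric case -/
theorem stmt0_side {s t : Term F} {θ : Subst F} (hθL : θ ∈ mguL [(s, t)])
    {x : ℕ} (hxt : x ∉ t.vars) (hlin : ∀ z, t.count z ≤ 1) {z0 : ℕ}
    (hz0 : 2 ≤ (θ x).count z0) : False := by
  have hgood : ∀ y, rcount y [(s, t)] ≤ 1 := by
    intro y
    show t.count y + rcount y ([] : Eqs F) ≤ 1
    have := hlin y
    simp only [rcount]
    omega
  have h0 : rcount x [(s, t)] = 0 := by
    show t.count x + rcount x ([] : Eqs F) = 0
    have hc : t.count x = 0 := by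
      have := Term.mem_vars.not.mp hxt
      omega
    simp only [rcount, hc]
  have hmain := (main_aux (varsE [(s, t)]).card (sizeE [(s, t)]) [(s, t)]
    le_rfl le_rfl hgood ⟨θ, hθL.1⟩).2 θ hθL
  have := hmain.1 x h0 z0
  omega

end Stmt0Assembly

/-- if `θ ∈ mgu({s = t})` and `χ(θ(x)) = 2` then either
`x ∈ var(s) ∩ var(t)`, or `x ∈ var(t)` and `χ(s) = 2`, or `x ∈ var(s)` and `χ(t) = 2`. -/
theorem stmt0 {F : ℕ → Type} (s t : Term F) (θ : Subst F)
    (hθ : θ ∈ mgu ({(s, t)} : Set (Term F × Term F)))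
    (x : ℕ) (hx : (θ x).mult = 2) :
    x ∈ s.vars ∩ t.vars ∨ (x ∈ t.vars ∧ s.mult = 2) ∨ (x ∈ s.vars ∧ t.mult = 2) := by
  have hθL : θ ∈ mguL [(s, t)] := by
    rw [← mgu_pair_eq]
    exact hθ
  obtain ⟨z0, hz0⟩ : ∃ z, 2 ≤ (θ x).count z := Term.exists_count_two_of_mult hx
  by_cases hxs : x ∈ s.vars <;> by_cases hxt : x ∈ t.vars
  · exact Or.inl ⟨hxs, hxt⟩
  · -- x ∈ vars s, x ∉ vars t
    by_cases hmt : t.mult = 2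
    · exact Or.inr (Or.inr ⟨hxs, hmt⟩)
    · exfalso
      have hlin : ∀ z, t.count z ≤ 1 := by
        intro z
        by_contra h
        exact hmt (Term.mult_eq_two_of_count (z := z) (by omega))
      exact stmt0_side hθL hxt hlin hz0
  · -- x ∈ vars t, x ∉ vars s
    by_cases hms : s.mult = 2
    · exact Or.inr (Or.inl ⟨hxt, hms⟩)
    · exfalso
      have hlin : ∀ z, s.count z ≤ 1 := by
        intro z
        by_contra h
        exact hms (Term.mult_eq_two_of_count (z := z) (by omega))
      have hθL' : θ ∈ mguL [(t, s)] := by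
        rw [mguL_congr (unifL_swap s t)]
        exact hθL
      exact stmt0_side hθL' hxs hlin hz0
  · -- x occurs in neither s nor t
    exfalso
    have hψu : (fun u => if u = x then Term.var x else θ u) ∈
        unif ({(s, t)} : Set (Term F × Term F)) := by
      rw [unif_pair_eq]
      refine ⟨?_, ?_⟩
      · apply Set.Finite.subset hθL.1.1
        intro u hu
        simp only [Subst.dom, Set.mem_setOf_eq] at hu ⊢
        by_cases hux : u = x
        · subst hux
          simp at hu
        · rw [if_neg hux] at hu
          exact hu
      · rw [List.forall_mem_singleton]
        have hs : Subst.apply (fun u => if u = x then Term.var x else θ u) s = θ.apply s := by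
          apply Subst.apply_ext
          intro y hy
          have hyx : y ≠ x := fun h => by
            subst h
            exact hxs (Term.mem_vars.mpr hy)
          rw [if_neg hyx]
        have ht' : Subst.apply (fun u => if u = x then Term.var x else θ u) t = θ.apply t := by
          apply Subst.apply_ext
          intro y hy
          have hyx : y ≠ x := fun h => by
            subst h
            exact hxt (Term.mem_vars.mpr hy)
          rw [if_neg hyx]
        show Subst.apply _ s = Subst.apply _ t
        rw [hs, ht']
        exact hθL.1.2 (s, t) (List.mem_singleton_self _)
    obtain ⟨δ, hδS, hc⟩ := hθ.2 _ hψu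
    have hψx : δ.apply (θ x) = Term.var x := by
      have h1 : (fun u => if u = x then Term.var x else θ u) x = δ.apply (θ x) := by
        rw [hc]
        rfl
      have h1' : (if x = x then (Term.var x : Term F) else θ x) = δ.apply (θ x) := h1
      rw [if_pos rfl] at h1'
      exact h1'.symm
    obtain ⟨w, hw⟩ := Subst.eq_var_of_apply_eq_var hψx
    rw [hw] at hz0
    simp only [Term.count] at hz0
    split at hz0 <;> omega

end SharingPaper
end

section
/- Let E be a finite set of equations and θ, φ ∈ imgu(E). Then: (1) for every M ⊆ U, M models θ iff M models φ; (2) α_Sh(θ) = α_Sh(φ); (3) for every x ∈ U, θ(x) is a variable iff φ(x) is a variable; (4) for every x ∈ U, χ(θ(x)) ≤ 1 iff χ(φ(x)) ≤ 1. -/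
open scoped Classical

namespace SharingPaper

variable {F : ℕ → Type}

/-! Two idempotent unifiers that are each an instance of the other differ only by a renaming of
the variables in their range. If `φ = δ ∘ θ` and `θ = δ' ∘ φ`, then for `y ∉ dom θ` we get
`δ' (δ y) = y`, so `δ y` is a variable `r y`; idempotence of `φ` gives `θ (r y) = y`, which makes
`r` injective off `dom θ`. Hence `φ x` is `θ x` with its variables renamed by `r`, and models,
sharing groups, bindings to variables and linearity all survive such a renaming. -/

namespace Term

theorem vars_apply (σ : Subst F) (t : Term F) :
    (σ.apply t).vars = ⋃ y ∈ t.vars, (σ y).vars := by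
  induction t with
  | var x => simp [Subst.apply, vars]
  | app n f ts ih =>
    ext z
    simp only [Subst.apply, vars, Set.mem_iUnion, ih]
    tauto

theorem count_le_count_apply {σ : Subst F} {ρ : ℕ → ℕ} {t : Term F}
    (hσ : ∀ y ∈ t.vars, σ y = .var (ρ y)) (z : ℕ) :
    t.count z ≤ (σ.apply t).count (ρ z) := by
  induction t with
  | var y =>
    rw [Subst.apply, hσ y rfl]
    by_cases hyz : y = z <;> simp [count, hyz]
  | app n f ts ih =>
    exact Finset.sum_le_sum fun i _ => ih i (fun y hy => hσ y (Set.mem_iUnion.2 ⟨i, hy⟩))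

theorem mult_le_one_iff (t : Term F) : t.mult ≤ 1 ↔ ∀ x, t.count x ≤ 1 := by
  have hbdd : BddAbove (Set.range fun x => chiVar x t) :=
    ⟨2, by rintro _ ⟨x, rfl⟩; exact min_le_left _ _⟩
  rw [mult, csSup_le_iff hbdd (Set.range_nonempty _), Set.forall_mem_range]
  refine forall_congr' fun x => ?_
  simp only [chiVar]
  omega

end Term

namespace Subst

variable {θ φ δ δ' : Subst F}

@[simp]
theorem comp_apply (x : ℕ) : comp δ θ x = δ.apply (θ x) := rfl

theorem eq_var_of_notMem_dom {x : ℕ} (hx : x ∉ θ.dom) : θ x = .var x := not_not.mp hx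

theorem exists_eq_var_of_apply_eq_var {t : Term F} {y : ℕ} (h : θ.apply t = .var y) :
    ∃ z, t = .var z ∧ θ z = .var y := by
  cases t with
  | var z => exact ⟨z, rfl, h⟩
  | app n f ts => simp [apply] at h

theorem models_iff {M : Set ℕ} : Models M θ ↔ ∀ x, (x ∈ M ↔ (θ x).vars ⊆ M) := by
  refine ⟨fun h x => ?_, fun h x _ => h x⟩
  by_cases hx : x ∈ θ.dom
  · exact h x hx
  · simp [eq_var_of_notMem_dom hx, Term.vars]

theorem Idempotent.notMem_dom_of_mem_vars (hθ : θ.Idempotent) {x y : ℕ}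
    (hy : y ∈ (θ x).vars) : y ∉ θ.dom := by
  intro hyd
  by_cases hx : x ∈ θ.dom
  · exact (Set.eq_empty_iff_forall_notMem.1 hθ) y ⟨hyd, Set.mem_biUnion hx hy⟩
  · rw [eq_var_of_notMem_dom hx, Term.vars, Set.mem_singleton_iff] at hy
    exact hx (hy ▸ hyd)

theorem Idempotent.occ_eq_empty (hθ : θ.Idempotent) {u : ℕ} (hu : u ∈ θ.dom) :
    θ.occ u = ∅ :=
  Set.eq_empty_of_forall_notMem fun _ hx => hθ.notMem_dom_of_mem_vars hx hu

theorem Idempotent.dom_eq_empty_of_eq_comp (hφ : φ.Idempotent) (hθ : θ.dom = ∅)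
    (hθφ : θ = comp δ φ) : φ.dom = ∅ := by
  have hθx : ∀ x, θ x = .var x := fun x => eq_var_of_notMem_dom (by simp [hθ])
  refine Set.eq_empty_of_forall_notMem fun x hx => hx ?_
  obtain ⟨z, hφx, hδz⟩ := exists_eq_var_of_apply_eq_var ((congrFun hθφ x).symm.trans (hθx x))
  have hφz : φ z = .var z :=
    eq_var_of_notMem_dom (hφ.notMem_dom_of_mem_vars (x := x) (by simp [hφx, Term.vars]))
  have hzx : Term.var z = (.var x : Term F) := by
    rw [← hθx z, congrFun hθφ z, comp_apply, hφz, apply, hδz]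
  rw [hφx, hzx]

theorem Idempotent.exists_renaming (hφ : φ.Idempotent) (hφθ : φ = comp δ θ)
    (hθφ : θ = comp δ' φ) :
    ∃ r : ℕ → ℕ, ∀ y ∉ θ.dom, δ y = .var (r y) ∧ θ (r y) = .var y := by
  suffices h : ∀ y, ∃ z, y ∉ θ.dom → δ y = .var z ∧ θ z = .var y from
    by choose r hr using h; exact ⟨r, hr⟩
  intro y
  by_cases hy : y ∈ θ.dom
  · exact ⟨0, fun h => absurd hy h⟩
  have hθy := eq_var_of_notMem_dom hy
  have hδδ' : δ'.apply (δ y) = .var y := by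
    rw [← hθy, congrFun hθφ y, comp_apply, congrFun hφθ y, comp_apply, hθy, apply]
  obtain ⟨z, hδy, hδ'z⟩ := exists_eq_var_of_apply_eq_var hδδ'
  have hφy : φ y = .var z := by rw [congrFun hφθ y, comp_apply, hθy, apply, hδy]
  have hφz : φ z = .var z :=
    eq_var_of_notMem_dom (hφ.notMem_dom_of_mem_vars (x := y) (by simp [hφy, Term.vars]))
  refine ⟨z, fun _ => ⟨hδy, ?_⟩⟩
  rw [congrFun hθφ z, comp_apply, hφz, apply, hδ'z]

section Renaming

variable {r : ℕ → ℕ}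

theorem injOn_of_renaming (hr : ∀ y ∉ θ.dom, δ y = .var (r y) ∧ θ (r y) = .var y) :
    Set.InjOn r θ.domᶜ := fun y₁ h₁ y₂ h₂ h => by
  simpa [h, (hr y₂ h₂).2, eq_comm] using (hr y₁ h₁).2

theorem vars_eq_image_of_renaming (hθ : θ.Idempotent) (hφθ : φ = comp δ θ)
    (hr : ∀ y ∉ θ.dom, δ y = .var (r y) ∧ θ (r y) = .var y) (x : ℕ) :
    (φ x).vars = r '' (θ x).vars := by
  rw [hφθ, comp_apply, Term.vars_apply]
  ext z
  simp only [Set.mem_iUnion, Set.mem_image, exists_prop]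
  refine exists_congr fun y => and_congr_right fun hy => ?_
  rw [(hr y (hθ.notMem_dom_of_mem_vars hy)).1, Term.vars, Set.mem_singleton_iff, eq_comm]

theorem models_of_renaming (hθ : θ.Idempotent) (hφθ : φ = comp δ θ)
    (hr : ∀ y ∉ θ.dom, δ y = .var (r y) ∧ θ (r y) = .var y) {M : Set ℕ}
    (hM : Models M θ) : Models M φ := by
  rw [models_iff] at hM ⊢
  have hrM : ∀ y ∉ θ.dom, r y ∈ M ↔ y ∈ M := fun y hy => by
    simpa [(hr y hy).2, Term.vars] using hM (r y)
  intro x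
  rw [hM x, vars_eq_image_of_renaming hθ hφθ hr, Set.image_subset_iff]
  exact forall₂_congr fun y hy => (hrM y (hθ.notMem_dom_of_mem_vars hy)).symm

/-- For `u ∈ dom θ` the group `occ θ u` is empty; it is matched by `occ φ u'` for any
`u' ∈ dom φ`, and `dom φ` is nonempty because `dom θ` is. -/
theorem alphaSh_subset_of_renaming (X : Set ℕ) (hθ : θ.Idempotent) (hφ : φ.Idempotent)
    (hφθ : φ = comp δ θ) (hr : ∀ y ∉ θ.dom, δ y = .var (r y) ∧ θ (r y) = .var y) :
    alphaSh X θ ⊆ alphaSh X φ := by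
  rintro _ ⟨u, rfl⟩
  by_cases hu : u ∈ θ.dom
  · obtain ⟨u', hu'⟩ : φ.dom.Nonempty := Set.nonempty_iff_ne_empty.2 fun h =>
      (Set.nonempty_of_mem hu).ne_empty (hθ.dom_eq_empty_of_eq_comp h hφθ)
    exact ⟨u', by simp only [hφ.occ_eq_empty hu', hθ.occ_eq_empty hu]⟩
  · refine ⟨r u, congrArg (· ∩ X) (Set.ext fun x => ?_)⟩
    simp only [occ, Set.mem_ofPred_eq, vars_eq_image_of_renaming hθ hφθ hr, Set.mem_image]
    refine ⟨fun ⟨y, hy, hyu⟩ => ?_, fun h => ⟨u, h, rfl⟩⟩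
    rwa [← injOn_of_renaming hr (hθ.notMem_dom_of_mem_vars hy) hu hyu]

theorem exists_eq_var_of_renaming (hθ : θ.Idempotent) (hφθ : φ = comp δ θ)
    (hr : ∀ y ∉ θ.dom, δ y = .var (r y) ∧ θ (r y) = .var y) {x : ℕ}
    (hx : ∃ y, θ x = .var y) : ∃ y, φ x = .var y := by
  obtain ⟨y, hy⟩ := hx
  have hyd : y ∉ θ.dom := hθ.notMem_dom_of_mem_vars (x := x) (by simp [hy, Term.vars])
  exact ⟨r y, by rw [hφθ, comp_apply, hy, apply, (hr y hyd).1]⟩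

theorem mult_le_one_of_renaming (hθ : θ.Idempotent) (hφθ : φ = comp δ θ)
    (hr : ∀ y ∉ θ.dom, δ y = .var (r y) ∧ θ (r y) = .var y) {x : ℕ}
    (hx : (φ x).mult ≤ 1) : (θ x).mult ≤ 1 := by
  rw [Term.mult_le_one_iff] at hx ⊢
  intro z
  calc (θ x).count z
      ≤ (δ.apply (θ x)).count (r z) :=
        Term.count_le_count_apply (fun y hy => (hr y (hθ.notMem_dom_of_mem_vars hy)).1) z
    _ = (φ x).count (r z) := by rw [hφθ, comp_apply]
    _ ≤ 1 := hx _

end Renaming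

end Subst

theorem stmt1_general {F : ℕ → Type} (X : Set ℕ)
    (E : Set (Term F × Term F))
    (θ φ : Subst F) (hθ : θ ∈ imgu E) (hφ : φ ∈ imgu E) :
    (∀ M : Set ℕ, Subst.Models M θ ↔ Subst.Models M φ) ∧
    Subst.alphaSh X θ = Subst.alphaSh X φ ∧
    (∀ x : ℕ, (∃ y, θ x = Term.var y) ↔ (∃ y, φ x = Term.var y)) ∧
    (∀ x : ℕ, (θ x).mult ≤ 1 ↔ (φ x).mult ≤ 1) := by
  obtain ⟨⟨hθu, hθmgu⟩, hθi⟩ := hθ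
  obtain ⟨⟨hφu, hφmgu⟩, hφi⟩ := hφ
  obtain ⟨δ, -, hφθ⟩ := hθmgu φ hφu
  obtain ⟨δ', -, hθφ⟩ := hφmgu θ hθu
  obtain ⟨r, hr⟩ := hφi.exists_renaming hφθ hθφ
  obtain ⟨r', hr'⟩ := hθi.exists_renaming hθφ hφθ
  exact ⟨fun M => ⟨Subst.models_of_renaming hθi hφθ hr, Subst.models_of_renaming hφi hθφ hr'⟩,
    (Subst.alphaSh_subset_of_renaming X hθi hφi hφθ hr).antisymm
      (Subst.alphaSh_subset_of_renaming X hφi hθi hθφ hr'),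
    fun x => ⟨Subst.exists_eq_var_of_renaming hθi hφθ hr, Subst.exists_eq_var_of_renaming hφi hθφ hr'⟩,
    fun x => ⟨Subst.mult_le_one_of_renaming hφi hθφ hr', Subst.mult_le_one_of_renaming hθi hφθ hr⟩⟩

/-- any two idempotent mgus of `E` have the same models,
the same sharing abstraction, bind the same variables to variables,
and agree on linearity. -/
theorem stmt1 {F : ℕ → Type} (X : Set ℕ) (hX : X.Finite)
    (E : Set (Term F × Term F)) (hE : E.Finite)
    (θ φ : Subst F) (hθ : θ ∈ imgu E) (hφ : φ ∈ imgu E) :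
    (∀ M : Set ℕ, Subst.Models M θ ↔ Subst.Models M φ) ∧
    Subst.alphaSh X θ = Subst.alphaSh X φ ∧
    (∀ x : ℕ, (∃ y, θ x = Term.var y) ↔ (∃ y, φ x = Term.var y)) ∧
    (∀ x : ℕ, (θ x).mult ≤ 1 ↔ (φ x).mult ≤ 1) :=
  stmt1_general X E θ φ hθ hφ

end SharingPaper
end

section
/- Let θ be an idempotent substitution with dom(θ) ∪ rng(θ) ⊆ X. Then for every u ∈ U, the assignment X \ (occ(θ, u) ∩ X) models θ; that is, the complement in X of every sharing group of α_Sh(θ) is a model of the groundness abstraction of θ. -/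
open scoped Classical

namespace SharingPaper

variable {F : ℕ → Type}

/-! Idempotence makes every variable of a binding `x ↦ t` unbound, and an unbound variable `y`
occurs only in `θ(y) = y`. Hence, for the variables `y` of `t`, `y ∈ occ(θ, u)` iff `y = u`, so
both sides of `x ∈ X \ occ(θ, u) ↔ var(t) ⊆ X \ occ(θ, u)` say that `u ∉ var(t)`. -/

namespace Subst

variable {θ : Subst F}

theorem eq_var_of_notMem_dom_s2 {y : ℕ} (hy : y ∉ dom θ) : θ y = .var y :=
  not_not.mp hy

theorem mem_occ_iff_of_notMem_dom {u y : ℕ} (hy : y ∉ dom θ) : y ∈ occ θ u ↔ u = y := by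
  simp only [occ, Set.mem_ofPred_eq, eq_var_of_notMem_dom_s2 hy, Term.vars, Set.mem_singleton_iff]

theorem mem_rng_of_mem_dom {x y : ℕ} (hx : x ∈ dom θ) (hy : y ∈ (θ x).vars) : y ∈ rng θ :=
  Set.mem_biUnion hx hy

theorem Idempotent.notMem_dom_of_mem_vars_s2 (hid : Idempotent θ) {x y : ℕ} (hx : x ∈ dom θ)
    (hy : y ∈ (θ x).vars) : y ∉ dom θ := fun hyd =>
  (Set.eq_empty_iff_forall_notMem.mp hid) y ⟨hyd, mem_rng_of_mem_dom hx hy⟩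

theorem Idempotent.models_diff_occ (hid : Idempotent θ) {X : Set ℕ} (hdom : dom θ ⊆ X)
    (hrng : rng θ ⊆ X) (u : ℕ) : Models (X \ occ θ u) θ := by
  intro x hx
  have hocc : ∀ y ∈ (θ x).vars, y ∈ occ θ u ↔ u = y := fun y hy =>
    mem_occ_iff_of_notMem_dom (hid.notMem_dom_of_mem_vars_s2 hx hy)
  have hvars : (θ x).vars ⊆ X := fun y hy => hrng (mem_rng_of_mem_dom hx hy)
  calc x ∈ X \ occ θ u ↔ u ∉ (θ x).vars := by simp [hdom hx, occ]
    _ ↔ (θ x).vars ⊆ X \ occ θ u := by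
      rw [Set.subset_sdiff, Set.disjoint_left, and_iff_right hvars]
      exact ⟨fun hu y hy hyu => hu ((hocc y hy).mp hyu ▸ hy),
        fun h hu => h hu ((hocc u hu).mpr rfl)⟩

end Subst

theorem stmt2_general {F : ℕ → Type} (X : Set ℕ)
    (θ : Subst F) (hid : Subst.Idempotent θ)
    (hdr : Subst.dom θ ∪ Subst.rng θ ⊆ X) :
    ∀ u : ℕ, Subst.Models (X \ (Subst.occ θ u ∩ X)) θ := by
  intro u
  obtain ⟨hdom, hrng⟩ := Set.union_subset_iff.mp hdr
  rw [Set.sdiff_inter_self_eq_sdiff]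
  exact hid.models_diff_occ hdom hrng u

/-- for an idempotent substitution `θ` with `dom(θ) ∪ rng(θ) ⊆ X`,
the complement in `X` of every sharing group `occ(θ, u) ∩ X` of `α_Sh(θ)` models `θ`. -/
theorem stmt2 {F : ℕ → Type} (X : Set ℕ) (hX : X.Finite)
    (θ : Subst F) (hsub : Subst.IsSubst θ) (hid : Subst.Idempotent θ)
    (hdr : Subst.dom θ ∪ Subst.rng θ ⊆ X) :
    ∀ u : ℕ, Subst.Models (X \ (Subst.occ θ u ∩ X)) θ :=
  stmt2_general X θ hid hdr

end SharingPaper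
end

section
/- For all F, L ⊆ X: γ_Fr(F) ∩ γ_Lin(L) = γ_Fr(F) ∩ γ_Lin(L ∪ F). -/
open scoped Classical

namespace SharingPaper

variable {F : ℕ → Type}

/-!
Take an idempotent mgu `θ₁` of `E` witnessing freeness on `Fv` and one, `θ₂`, witnessing
linearity on `L`. Since `θ₂` is most general, `θ₁ = δ ∘ θ₂`; a substitution can only map a
variable to a variable, so `θ₂ x` is a variable whenever `θ₁ x` is. Hence `θ₂` is free, and
in particular linear, on `Fv` as well.
-/

theorem IsVarTerm.mult_le_one {t : Term F} (ht : IsVarTerm t) : t.mult ≤ 1 := by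
  obtain ⟨y, rfl⟩ := ht
  apply csSup_le (Set.range_nonempty _)
  rintro n ⟨x, rfl⟩
  simp only [Term.chiVar, Term.count]
  split <;> simp

theorem Subst.isVarTerm_of_isVarTerm_apply (δ : Subst F) {t : Term F}
    (h : IsVarTerm (δ.apply t)) : IsVarTerm t := by
  cases t with
  | var z => exact ⟨z, rfl⟩
  | app n f ts => obtain ⟨y, hy⟩ := h; cases hy

theorem Subst.Le.isVarTerm {θ ψ : Subst F} (h : Subst.Le θ ψ) {x : ℕ}
    (hx : IsVarTerm (ψ x)) : IsVarTerm (θ x) := by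
  obtain ⟨δ, -, rfl⟩ := h
  exact δ.isVarTerm_of_isVarTerm_apply hx

theorem gammaLin_anti {L L' : Set ℕ} (h : L ⊆ L') :
    (gammaLin L' : Set (Set (Term F × Term F))) ⊆ gammaLin L :=
  fun _ ⟨hE, θ, hθ, hlin⟩ => ⟨hE, θ, hθ, fun x hx => hlin x (h hx)⟩

theorem mem_gammaLin_union_of_mem_gammaFr {Fv L : Set ℕ} {E : Set (Term F × Term F)}
    (hFr : E ∈ gammaFr Fv) (hLin : E ∈ gammaLin L) : E ∈ gammaLin (L ∪ Fv) := by
  obtain ⟨-, θ₁, hθ₁, hfree⟩ := hFr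
  obtain ⟨hE, θ₂, hθ₂, hlin⟩ := hLin
  refine ⟨hE, θ₂, hθ₂, ?_⟩
  rintro x (hx | hx)
  · exact hlin x hx
  · exact ((hθ₂.1.2 θ₁ hθ₁.1.1).isVarTerm (hfree x hx)).mult_le_one

theorem stmt4_general {F : ℕ → Type}
    (Fv L : Set ℕ) :
    (gammaFr Fv ∩ gammaLin L : Set (Set (Term F × Term F))) =
      gammaFr Fv ∩ gammaLin (L ∪ Fv) := by
  refine Set.Subset.antisymm ?_ (Set.inter_subset_inter_right _ ?_)
  · exact fun E ⟨hFr, hLin⟩ => ⟨hFr, mem_gammaLin_union_of_mem_gammaFr hFr hLin⟩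
  · exact gammaLin_anti Set.subset_union_left

/-- `γ_Fr(F) ∩ γ_Lin(L) = γ_Fr(F) ∩ γ_Lin(L ∪ F)`. -/
theorem stmt4 {F : ℕ → Type} (X : Set ℕ) (hX : X.Finite)
    (Fv L : Set ℕ) (hF : Fv ⊆ X) (hL : L ⊆ X) :
    (gammaFr Fv ∩ gammaLin L : Set (Set (Term F × Term F))) =
      gammaFr Fv ∩ gammaLin (L ∪ Fv) :=
  stmt4_general Fv L

end SharingPaper
end

section
/- Let S be a sharing abstraction over X and let s, t be terms with var(s) ∪ var(t) ⊆ X. If var(rel(s, S)) ∩ var(rel(t, S)) = ∅, then for every E ∈ γ_Sh(S) and every θ ∈ imgu(E), var(θ(s)) ∩ var(θ(t)) = ∅. -/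
open scoped Classical

namespace SharingPaper

variable {F : ℕ → Type}

/-!
Fix an idempotent mgu `θ'` of `E` with `α_Sh(θ') ⊆ S`. A variable `z` shared by `θ'(s)` and
`θ'(t)` gives the sharing group `occ(θ', z) ∩ X ∈ S`, which meets both `var(s)` and `var(t)`
and so puts a variable into `var(rel(s, S)) ∩ var(rel(t, S))`. Any other mgu `θ` is a
variant of `θ'`: writing `θ = δ ∘ θ'` and `θ' = δ' ∘ θ`, idempotence of `θ'` makes `δ' ∘ δ`
the identity on the variables of `θ'(s)` and `θ'(t)`, so `δ` renames them injectively and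
disjointness carries over from `θ'` to `θ`.
-/

namespace Subst

lemma mem_vars_apply {θ : Subst F} {u : Term F} {y : ℕ} :
    y ∈ (θ.apply u).vars ↔ ∃ x ∈ u.vars, y ∈ (θ x).vars := by
  induction u with
  | var x => simp [apply, Term.vars]
  | app n f ts ih => simp only [apply, Term.vars, Set.mem_iUnion, ih]; tauto

lemma apply_comp_s5 (δ θ : Subst F) (u : Term F) :
    (comp δ θ).apply u = δ.apply (θ.apply u) := by
  induction u with
  | var x => rfl
  | app n f ts ih => simp only [apply, ih]

lemma apply_eq_var_iff {σ : Subst F} {v : Term F} {z : ℕ} :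
    σ.apply v = .var z ↔ ∃ w, v = .var w ∧ σ w = .var z := by
  cases v with
  | var w => simp [apply]
  | app n f ts => simp [apply]

lemma eq_var_of_mem_vars_of_apply_eq_var {σ : Subst F} {v : Term F} {y z : ℕ}
    (hy : y ∈ v.vars) (hv : σ.apply v = .var z) : σ y = .var z := by
  obtain ⟨w, rfl, hw⟩ := apply_eq_var_iff.mp hv
  rwa [show y = w from hy]

lemma Idempotent.eq_var_of_mem_vars_apply {θ : Subst F} (hθ : Idempotent θ) {u : Term F}
    {z : ℕ} (hz : z ∈ (θ.apply u).vars) : θ z = .var z := by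
  obtain ⟨x, -, hzx⟩ := mem_vars_apply.mp hz
  by_contra hzz
  by_cases hx : x ∈ dom θ
  · exact (Set.eq_empty_iff_forall_notMem.mp hθ) z ⟨hzz, Set.mem_biUnion hx hzx⟩
  · rw [show θ x = .var x by simpa [dom] using hx, Term.vars, Set.mem_singleton_iff] at hzx
    exact hx (hzx ▸ hzz)

lemma Idempotent.apply_apply_eq_var {θ ψ δ δ' : Subst F} (hθ : Idempotent θ)
    (hψ : ψ = comp δ θ) (hθψ : θ = comp δ' ψ) {u : Term F} {z : ℕ}
    (hz : z ∈ (θ.apply u).vars) : δ'.apply (δ z) = .var z := by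
  have hfix := hθ.eq_var_of_mem_vars_apply hz
  calc δ'.apply (δ z) = δ'.apply (δ.apply (θ z)) := by rw [hfix]; rfl
    _ = θ z := by rw [hψ] at hθψ; exact (congrFun hθψ z).symm
    _ = .var z := hfix

lemma Idempotent.vars_apply_inter_eq_empty_of_le {θ ψ : Subst F} (hθ : Idempotent θ)
    (hθψ : Le θ ψ) (hψθ : Le ψ θ) {s t : Term F}
    (hdisj : (θ.apply s).vars ∩ (θ.apply t).vars = ∅) :
    (ψ.apply s).vars ∩ (ψ.apply t).vars = ∅ := by
  obtain ⟨δ, -, hδ⟩ := hθψ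
  obtain ⟨δ', -, hδ'⟩ := hψθ
  have renamed : ∀ {u : Term F} {y : ℕ}, y ∈ (ψ.apply u).vars →
      ∃ z ∈ (θ.apply u).vars, δ' y = .var z := by
    intro u y hy
    rw [hδ, apply_comp_s5] at hy
    obtain ⟨z, hz, hyz⟩ := mem_vars_apply.mp hy
    exact ⟨z, hz, eq_var_of_mem_vars_of_apply_eq_var hyz (hθ.apply_apply_eq_var hδ hδ' hz)⟩
  refine Set.eq_empty_iff_forall_notMem.mpr fun y ⟨hys, hyt⟩ => ?_
  obtain ⟨z, hzs, hz⟩ := renamed hys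
  obtain ⟨z', hzt, hz'⟩ := renamed hyt
  obtain rfl : z = z' := Term.var.inj (hz.symm.trans hz')
  exact (Set.eq_empty_iff_forall_notMem.mp hdisj) z ⟨hzs, hzt⟩

end Subst

lemma vars_apply_inter_eq_empty_of_alphaSh_subset {X : Set ℕ} {S : Set (Set ℕ)}
    {θ : Subst F} (hα : Subst.alphaSh X θ ⊆ S) {s t : Term F} (hs : s.vars ⊆ X)
    (ht : t.vars ⊆ X) (hindep : varS (rel s S) ∩ varS (rel t S) = ∅) :
    (θ.apply s).vars ∩ (θ.apply t).vars = ∅ := by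
  refine Set.eq_empty_iff_forall_notMem.mpr fun z ⟨hzs, hzt⟩ => ?_
  obtain ⟨x, hxs, hzx⟩ := Subst.mem_vars_apply.mp hzs
  obtain ⟨x', hxt, hzx'⟩ := Subst.mem_vars_apply.mp hzt
  set G := Subst.occ θ z ∩ X
  have hG : G ∈ S := hα ⟨z, rfl⟩
  have hxG : x ∈ G := ⟨hzx, hs hxs⟩
  have hGs : G ∈ rel s S := ⟨hG, Set.nonempty_iff_ne_empty.mp ⟨x, hxs, hxG⟩⟩
  have hGt : G ∈ rel t S := ⟨hG, Set.nonempty_iff_ne_empty.mp ⟨x', hxt, hzx', ht hxt⟩⟩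
  exact (Set.eq_empty_iff_forall_notMem.mp hindep) x
    ⟨Set.mem_biUnion hGs hxG, Set.mem_biUnion hGt hxG⟩

theorem stmt5_general {F : ℕ → Type} (X : Set ℕ)
    (S : Set (Set ℕ))
    (s t : Term F) (hst : s.vars ∪ t.vars ⊆ X)
    (hindep : varS (rel s S) ∩ varS (rel t S) = ∅) :
    ∀ E ∈ (gammaSh X S : Set (Set (Term F × Term F))), ∀ θ ∈ imgu E,
      (θ.apply s).vars ∩ (θ.apply t).vars = ∅ := by
  rintro E ⟨-, θ', ⟨⟨hθ'E, hθ'mgu⟩, hθ'idem⟩, hα⟩ θ ⟨⟨hθE, hθmgu⟩, -⟩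
  have hθ'disj := vars_apply_inter_eq_empty_of_alphaSh_subset hα
    (Set.union_subset_iff.mp hst).1 (Set.union_subset_iff.mp hst).2 hindep
  exact hθ'idem.vars_apply_inter_eq_empty_of_le (hθ'mgu θ hθE) (hθmgu θ' hθ'E) hθ'disj

/-- the independence check is sound: if
`var(rel(s, S)) ∩ var(rel(t, S)) = ∅` then `var(θ(s)) ∩ var(θ(t)) = ∅`
for every `E ∈ γ_Sh(S)` and every `θ ∈ imgu(E)`. -/
theorem stmt5 {F : ℕ → Type} (X : Set ℕ) (hX : X.Finite)
    (S : Set (Set ℕ)) (hS : ∅ ∈ S) (hSX : ∀ G ∈ S, G ⊆ X)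
    (s t : Term F) (hst : s.vars ∪ t.vars ⊆ X)
    (hindep : varS (rel s S) ∩ varS (rel t S) = ∅) :
    ∀ E ∈ (gammaSh X S : Set (Set (Term F × Term F))), ∀ θ ∈ imgu E,
      (θ.apply s).vars ∩ (θ.apply t).vars = ∅ :=
  stmt5_general X S s t hst hindep

end SharingPaper
end

section
/- Let X be a set and let S1, S2 be sets of subsets of X with var(S1) ∩ var(S2) = ∅. Then (S1* ⊎ S2) ∩ (S1 ⊎ S2*) = S1 ⊎ S2. -/
namespace SharingPaper

/-! Both sides of the identity contain `S1 ⊎ S2` because `S ⊆ S*`. Conversely, every element of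
`S*` lies inside `var(S)`, so when `var(S1)` and `var(S2)` are disjoint, a set `A ∪ B` with
`A ⊆ var(S1)`, `B ⊆ var(S2)` determines `A` as its trace on `var(S1)`. Hence if
`A ∪ B = C ∪ D` with `A ∈ S1*`, `B ∈ S2`, `C ∈ S1`, `D ∈ S2*`, then `A = C ∈ S1`. -/

section

variable {α : Type*}

lemma subset_closure (S : Set (Set α)) : S ⊆ closure S :=
  fun _ hG _ hS' => hS'.1 hG

lemma subset_varS_of_mem {S : Set (Set α)} {G : Set α} (hG : G ∈ S) : G ⊆ varS S :=
  Set.subset_biUnion_of_mem (u := id) hG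

lemma subset_varS_of_mem_closure {S : Set (Set α)} {G : Set α} (hG : G ∈ closure S) :
    G ⊆ varS S :=
  hG {H | H ⊆ varS S} ⟨fun _ => subset_varS_of_mem, fun _ h1 _ h2 => Set.union_subset h1 h2⟩

lemma pairUnion_mono {S1 S2 T1 T2 : Set (Set α)} (h1 : S1 ⊆ T1) (h2 : S2 ⊆ T2) :
    pairUnion S1 S2 ⊆ pairUnion T1 T2 := by
  rintro G ⟨G1, hG1, G2, hG2, rfl⟩
  exact ⟨G1, h1 hG1, G2, h2 hG2, rfl⟩

lemma union_inter_eq_left_of_disjoint {U V A B : Set α} (hUV : Disjoint U V)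
    (hA : A ⊆ U) (hB : B ⊆ V) : (A ∪ B) ∩ U = A := by
  rw [Set.union_inter_distrib_right, Set.inter_eq_left.mpr hA,
    (hUV.symm.mono_left hB).inter_eq, Set.union_empty]

lemma left_eq_of_union_eq_of_disjoint {U V A B C D : Set α} (hUV : Disjoint U V)
    (hA : A ⊆ U) (hB : B ⊆ V) (hC : C ⊆ U) (hD : D ⊆ V) (h : A ∪ B = C ∪ D) : A = C := by
  rw [← union_inter_eq_left_of_disjoint hUV hA hB, h,
    union_inter_eq_left_of_disjoint hUV hC hD]

end

/-- if `var(S1) ∩ var(S2) = ∅` then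
`(S1* ⊎ S2) ∩ (S1 ⊎ S2*) = S1 ⊎ S2`. -/
theorem stmt8 {α : Type*} (S1 S2 : Set (Set α))
    (h : varS S1 ∩ varS S2 = ∅) :
    pairUnion (closure S1) S2 ∩ pairUnion S1 (closure S2) = pairUnion S1 S2 := by
  refine Set.Subset.antisymm ?_ fun G hG =>
    ⟨pairUnion_mono (subset_closure S1) le_rfl hG, pairUnion_mono le_rfl (subset_closure S2) hG⟩
  rintro _ ⟨⟨A, hA, B, hB, rfl⟩, C, hC, D, hD, hABCD⟩
  have hAC : A = C :=
    left_eq_of_union_eq_of_disjoint (Set.disjoint_iff_inter_eq_empty.mpr h)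
      (subset_varS_of_mem_closure hA) (subset_varS_of_mem hB) (subset_varS_of_mem hC)
      (subset_varS_of_mem_closure hD) hABCD
  exact ⟨A, hAC ▸ hC, B, hB, rfl⟩

end SharingPaper
end
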